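/- Assume γ₁ ≤ γ₂ and γ₁/γ₂ > α, and set l = √(γ₂/α). Then the following are equivalent: (a) every P ∈ D satisfies P({t ∈ ℝ : t·y ≤ b}) ≥ 1 − α; (b) μ·y + l·√(Σ·y²) ≤ b. (This is the second case of the paper's Theorem 1.) -/

import Mathlib

/-! Sufficiency is Chebyshev's inequality around `μ`: a violation `t * y > b` forces
`(t - μ) ^ 2 > γ₂ * Sig / α`, an event of probability at most `α`. For necessity, if
`b < μ * y + √(γ₂ * Sig * y ^ 2 / α)`, take a weight `β` slightly above `α` and the measure with
mass `1 - β` at `μ` and `β` at a point `μ + d` with `β * d ^ 2 ≤ γ₂ * Sig` and `(μ + d) * y > b`.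
Since `β * γ₂ < γ₁` (possible as `γ₁ / γ₂ > α`), its mean also stays within the ambiguity set,
while it violates the constraint with probability `β > α`. -/

open MeasureTheory Real

noncomputable def twoPoint (β u v : ℝ) : Measure ℝ :=
  ENNReal.ofReal (1 - β) • Measure.dirac u + ENNReal.ofReal β • Measure.dirac v

def momentAmbiguitySet (μ γ₁ γ₂ Sig : ℝ) : Set (Measure ℝ) :=
  {P : Measure ℝ | IsProbabilityMeasure P ∧ MemLp (id : ℝ → ℝ) 2 P ∧
    ((∫ t, t ∂P) - μ) ^ 2 ≤ γ₁ * Sig ∧ (∫ t, (t - μ) ^ 2 ∂P) ≤ γ₂ * Sig}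

section TwoPoint

variable {β : ℝ} (u v : ℝ)

theorem integrable_twoPoint (f : ℝ → ℝ) : Integrable f (twoPoint β u v) :=
  ((integrable_dirac enorm_lt_top).smul_measure ENNReal.ofReal_ne_top).add_measure
    ((integrable_dirac enorm_lt_top).smul_measure ENNReal.ofReal_ne_top)

theorem integral_twoPoint (hβ0 : 0 ≤ β) (hβ1 : β ≤ 1) (f : ℝ → ℝ) :
    ∫ t, f t ∂twoPoint β u v = (1 - β) * f u + β * f v := by
  have hint : ∀ a : ℝ, Integrable f (Measure.dirac a) := fun _ ↦ integrable_dirac enorm_lt_top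
  rw [twoPoint, integral_add_measure ((hint u).smul_measure ENNReal.ofReal_ne_top)
      ((hint v).smul_measure ENNReal.ofReal_ne_top), integral_smul_measure,
    integral_smul_measure, integral_dirac, integral_dirac, ENNReal.toReal_ofReal (by linarith),
    ENNReal.toReal_ofReal hβ0, smul_eq_mul, smul_eq_mul]

theorem isProbabilityMeasure_twoPoint (hβ0 : 0 ≤ β) (hβ1 : β ≤ 1) :
    IsProbabilityMeasure (twoPoint β u v) := by
  constructor
  rw [twoPoint, Measure.add_apply, Measure.smul_apply, Measure.smul_apply, measure_univ,
    measure_univ, smul_eq_mul, smul_eq_mul, mul_one, mul_one,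
    ← ENNReal.ofReal_add (by linarith) hβ0]
  norm_num

theorem twoPoint_real_le (hβ1 : β ≤ 1) {s : Set ℝ} (hv : v ∉ s) :
    (twoPoint β u v).real s ≤ 1 - β := by
  have : twoPoint β u v s ≤ ENNReal.ofReal (1 - β) := by
    rw [twoPoint, Measure.add_apply, Measure.smul_apply, Measure.smul_apply,
      Measure.dirac_apply v, Set.indicator_of_notMem hv, smul_zero, add_zero, smul_eq_mul]
    exact mul_le_of_le_one_right' prob_le_one
  exact ENNReal.toReal_le_of_le_ofReal (by linarith) this

theorem twoPoint_mem_momentAmbiguitySet {μ γ₁ γ₂ Sig d : ℝ} (hβ0 : 0 ≤ β) (hβ1 : β ≤ 1)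
    (hSig : 0 ≤ Sig) (hβγ : β * γ₂ ≤ γ₁) (hd : β * d ^ 2 ≤ γ₂ * Sig) :
    twoPoint β μ (μ + d) ∈ momentAmbiguitySet μ γ₁ γ₂ Sig := by
  have := isProbabilityMeasure_twoPoint μ (μ + d) hβ0 hβ1
  refine ⟨this, ?_, ?_, ?_⟩
  · exact (memLp_two_iff_integrable_sq aestronglyMeasurable_id).2 (integrable_twoPoint _ _ _)
  · rw [integral_twoPoint μ (μ + d) hβ0 hβ1 (fun t ↦ t)]
    calc ((1 - β) * μ + β * (μ + d) - μ) ^ 2 = β * (β * d ^ 2) := by ring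
      _ ≤ β * (γ₂ * Sig) := by gcongr
      _ ≤ γ₁ * Sig := by rw [← mul_assoc]; exact mul_le_mul_of_nonneg_right hβγ hSig
  · rw [integral_twoPoint μ (μ + d) hβ0 hβ1 (fun t ↦ (t - μ) ^ 2)]
    simpa using hd

end TwoPoint

section MomentAmbiguitySet

variable {α γ₁ γ₂ Sig μ b y : ℝ}

theorem one_sub_le_measureReal_of_mem_momentAmbiguitySet (hα : 0 < α) (hγ₂Sig : 0 < γ₂ * Sig)
    (hb : μ * y + √(γ₂ * Sig * y ^ 2 / α) ≤ b) {P : Measure ℝ}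
    (hP : P ∈ momentAmbiguitySet μ γ₁ γ₂ Sig) :
    1 - α ≤ P.real {t | t * y ≤ b} := by
  obtain ⟨hPprob, hP2, -, hvar⟩ := hP
  set ε := γ₂ * Sig / α
  have hε : 0 < ε := by positivity
  have hsub : {t | t * y ≤ b}ᶜ ⊆ {t | ε ≤ (t - μ) ^ 2} := by
    intro t ht
    simp only [Set.mem_compl_iff, Set.mem_ofPred_eq, not_le] at ht ⊢
    have hpos : 0 < (t - μ) * y := by linarith [sqrt_nonneg (γ₂ * Sig * y ^ 2 / α)]
    have hsq : γ₂ * Sig * y ^ 2 / α < ((t - μ) * y) ^ 2 := (sqrt_lt' hpos).1 (by linarith)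
    have hy : y ≠ 0 := by rintro rfl; simp at hpos
    have hy2 : 0 < y ^ 2 := by positivity
    rw [mul_div_right_comm, mul_pow] at hsq
    exact (lt_of_mul_lt_mul_right hsq hy2.le).le
  have hmarkov : ε * P.real {t | ε ≤ (t - μ) ^ 2} ≤ ∫ t, (t - μ) ^ 2 ∂P :=
    mul_meas_ge_le_integral_of_nonneg (ae_of_all _ fun t ↦ sq_nonneg _)
      (by simpa using (hP2.sub (memLp_const μ)).integrable_sq) ε
  have htail : P.real {t | t * y ≤ b}ᶜ ≤ α := by
    calc P.real {t | t * y ≤ b}ᶜ ≤ P.real {t | ε ≤ (t - μ) ^ 2} := measureReal_mono hsub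
      _ ≤ α := by
        rw [← mul_le_mul_iff_right₀ hε]
        calc ε * _ ≤ γ₂ * Sig := hmarkov.trans hvar
          _ = ε * α := (div_mul_cancel₀ _ hα.ne').symm
  rw [probReal_compl_eq_one_sub (measurableSet_le (by fun_prop) measurable_const)] at htail
  linarith

theorem exists_weight_gt (hα0 : 0 < α) (hα1 : α < 1) (hγ₂ : 0 < γ₂) (hα : α < γ₁ / γ₂)
    {c : ℝ} (hc : c < √(γ₂ * Sig * y ^ 2 / α)) :
    ∃ β, α < β ∧ β < 1 ∧ β * γ₂ < γ₁ ∧ c < √(γ₂ * Sig * y ^ 2 / β) := by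
  have hβγ : ∀ᶠ β in nhds α, β * γ₂ < γ₁ :=
    (continuous_mul_const γ₂).continuousAt.eventually_lt continuousAt_const
      ((lt_div_iff₀ hγ₂).1 hα)
  have hβc : ∀ᶠ β in nhds α, c < √(γ₂ * Sig * y ^ 2 / β) :=
    continuousAt_const.eventually_lt
      ((continuousAt_const.div continuousAt_id hα0.ne').sqrt) hc
  have hIoi : Set.Ioi α ∈ nhdsWithin α (Set.Ioi α) := self_mem_nhdsWithin
  exact ((((eventually_lt_nhds hα1).and (hβγ.and hβc)).filter_mono nhdsWithin_le_nhds).and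
    hIoi).exists.imp fun β ⟨h, hαβ⟩ ↦ ⟨hαβ, h⟩

theorem exists_mul_gt_of_lt_sqrt {s c : ℝ} (hs : 0 ≤ s) (hc : c < √(s * y ^ 2)) :
    ∃ d, d ^ 2 ≤ s ∧ c < d * y := by
  rcases eq_or_ne y 0 with rfl | hy
  · exact ⟨0, by simpa using hs, by simpa using hc⟩
  · refine ⟨√s * y / |y|, ?_, ?_⟩
    · rw [div_pow, mul_pow, sq_sqrt hs, sq_abs, mul_div_assoc, div_self (by positivity),
        mul_one]
    · rwa [div_mul_eq_mul_div, mul_assoc, ← sq, ← sq_abs, sq, ← mul_assoc,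
        mul_div_assoc, div_self (abs_ne_zero.2 hy), mul_one, ← sqrt_sq_eq_abs, ← sqrt_mul hs]

theorem exists_mem_momentAmbiguitySet_measureReal_lt (hα0 : 0 < α) (hα1 : α < 1)
    (hγ₂ : 0 < γ₂) (hSig : 0 ≤ Sig) (hα : α < γ₁ / γ₂)
    (hb : b < μ * y + √(γ₂ * Sig * y ^ 2 / α)) :
    ∃ P ∈ momentAmbiguitySet μ γ₁ γ₂ Sig, P.real {t | t * y ≤ b} < 1 - α := by
  obtain ⟨β, hαβ, hβ1, hβγ, hβc⟩ :=
    exists_weight_gt (c := b - μ * y) hα0 hα1 hγ₂ hα (sub_lt_iff_lt_add'.2 hb)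
  have hβ0 : 0 < β := hα0.trans hαβ
  obtain ⟨d, hd, hdy⟩ := exists_mul_gt_of_lt_sqrt (s := γ₂ * Sig / β) (y := y) (by positivity)
    (by rwa [div_mul_eq_mul_div])
  refine ⟨twoPoint β μ (μ + d), twoPoint_mem_momentAmbiguitySet hβ0.le hβ1.le hSig hβγ.le ?_, ?_⟩
  · rwa [le_div_iff₀ hβ0, mul_comm] at hd
  · refine (twoPoint_real_le μ (μ + d) hβ1.le ?_).trans_lt (by linarith)
    simp only [Set.mem_ofPred_eq, not_le]
    linarith

end MomentAmbiguitySet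

theorem stmt_1_general
    (α γ₁ γ₂ Sig μ b y : ℝ)
    (hα0 : 0 < α) (hα1 : α < 1) (hγ₂ : 1 < γ₂) (hSig : 0 < Sig)
    (hcase : γ₁ / γ₂ > α)
    (l : ℝ) (hl : l = Real.sqrt (γ₂ / α))
    (D : Set (Measure ℝ))
    (hD : D = {P : Measure ℝ | IsProbabilityMeasure P ∧ MemLp (id : ℝ → ℝ) 2 P ∧
      ((∫ t, t ∂P) - μ) ^ 2 ≤ γ₁ * Sig ∧ (∫ t, (t - μ) ^ 2 ∂P) ≤ γ₂ * Sig}) :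
    (∀ P ∈ D, 1 - α ≤ (P {t : ℝ | t * y ≤ b}).toReal) ↔
      μ * y + l * Real.sqrt (Sig * y ^ 2) ≤ b := by
  have hγ₂0 : 0 < γ₂ := by linarith
  have hl' : l * √(Sig * y ^ 2) = √(γ₂ * Sig * y ^ 2 / α) := by
    rw [hl, ← sqrt_mul (by positivity)]
    ring_nf
  change (∀ P ∈ D, 1 - α ≤ P.real _) ↔ _
  rw [hl', show D = momentAmbiguitySet μ γ₁ γ₂ Sig from hD]
  constructor
  · intro hall
    by_contra! hb
    obtain ⟨P, hP, hlt⟩ :=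
      exists_mem_momentAmbiguitySet_measureReal_lt hα0 hα1 hγ₂0 hSig.le hcase hb
    exact (hall P hP).not_gt hlt
  · exact fun hb P ↦ one_sub_le_measureReal_of_mem_momentAmbiguitySet hα0 (by positivity) hb

/-- Second case of the paper's Theorem 1: under `γ₁ ≤ γ₂` and `γ₁/γ₂ > α`, the
distributionally robust chance constraint over the moment ambiguity set `D` is
equivalent to a second-order cone constraint with `l = √(γ₂/α)`. -/
theorem stmt_1
    (α γ₁ γ₂ Sig μ b y : ℝ)
    (hα0 : 0 < α) (hα1 : α < 1) (hγ₁ : 0 < γ₁) (hγ₂ : 1 < γ₂) (hSig : 0 < Sig)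
    (hle : γ₁ ≤ γ₂) (hcase : γ₁ / γ₂ > α)
    (l : ℝ) (hl : l = Real.sqrt (γ₂ / α))
    (D : Set (Measure ℝ))
    (hD : D = {P : Measure ℝ | IsProbabilityMeasure P ∧ MemLp (id : ℝ → ℝ) 2 P ∧
      ((∫ t, t ∂P) - μ) ^ 2 ≤ γ₁ * Sig ∧ (∫ t, (t - μ) ^ 2 ∂P) ≤ γ₂ * Sig}) :
    (∀ P ∈ D, 1 - α ≤ (P {t : ℝ | t * y ≤ b}).toReal) ↔
      μ * y + l * Real.sqrt (Sig * y ^ 2) ≤ b :=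
  stmt_1_general α γ₁ γ₂ Sig μ b y hα0 hα1 hγ₂ hSig hcase l hl D hD
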